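/- arXiv:math/0505410 — 2 statements merged into one kernel-verified Lean document; each statement's English description precedes it below -/
import Mathlib

section
/- The Gerstenhaber composition on Hochschild cochains is graded right-symmetric (a graded pre-Lie product): for all φ ∈ C^{k}(A), ψ ∈ C^{l}(A), χ ∈ C^{m}(A) one has (φ ∘ ψ) ∘ χ − φ ∘ (ψ ∘ χ) = (−1)^{lm} ( (φ ∘ χ) ∘ ψ − φ ∘ (χ ∘ ψ) ). -/
/-! Hochschild cochains and the Gerstenhaber composition.

A (raw) Hochschild cochain of degree `k` on `A` is a function on `(k+1)`-tuples
of elements of `A`; the elements of `C^k(A)` in the statement are the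
`R`-multilinear such maps. -/

/-- Raw Hochschild cochain of degree `k` on `A`. -/
abbrev Cochain (A : Type*) (k : ℕ) := (Fin (k + 1) → A) → A

/-- The elementary composition `φ ∘ᵢ ψ`, inserting `ψ` in the `i`-th slot of `φ`. -/
def insComp {A : Type*} {k l : ℕ} (φ : Cochain A k) (ψ : Cochain A l)
    (i : Fin (k + 1)) : Cochain A (k + l) :=
  fun f => φ fun j =>
    if (j : ℕ) < (i : ℕ) then f ⟨(j : ℕ), by have := j.isLt; omega⟩
    else if (j : ℕ) = (i : ℕ) then
      ψ fun t => f ⟨(i : ℕ) + (t : ℕ), by have := i.isLt; have := t.isLt; omega⟩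
    else f ⟨(j : ℕ) + l, by have := j.isLt; omega⟩

/-- The Gerstenhaber composition `φ ∘ ψ = Σᵢ (-1)^(i·l) φ ∘ᵢ ψ`. -/
def gComp {A : Type*} [AddCommGroup A] {k l : ℕ} (φ : Cochain A k) (ψ : Cochain A l) :
    Cochain A (k + l) :=
  ∑ i : Fin (k + 1), ((-1 : ℤ) ^ ((i : ℕ) * l)) • insComp φ ψ i

/-- Degree cast of cochains. -/
def castC {A : Type*} {m n : ℕ} (h : m = n) (φ : Cochain A m) : Cochain A n :=
  fun f => φ fun j => f (Fin.cast (by omega) j)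

set_option linter.unusedSectionVars false

section Aux
variable {A : Type*} [AddCommGroup A] {k l m : ℕ}

/-- the tuple fed to the outer cochain in `insComp`. -/
def insTuple (ψ : Cochain A l) (i : Fin (k + 1)) (f : Fin (k + l + 1) → A) :
    Fin (k + 1) → A := fun j =>
  if (j : ℕ) < (i : ℕ) then f ⟨(j : ℕ), by have := j.isLt; omega⟩
  else if (j : ℕ) = (i : ℕ) then
    ψ fun t => f ⟨(i : ℕ) + (t : ℕ), by have := i.isLt; have := t.isLt; omega⟩
  else f ⟨(j : ℕ) + l, by have := j.isLt; omega⟩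

lemma insComp_apply (φ : Cochain A k) (ψ : Cochain A l) (i : Fin (k+1))
    (f : Fin (k + l + 1) → A) : insComp φ ψ i f = φ (insTuple ψ i f) := rfl

lemma gComp_apply (φ : Cochain A k) (ψ : Cochain A l) (f : Fin (k + l + 1) → A) :
    gComp φ ψ f = ∑ i : Fin (k + 1), ((-1 : ℤ) ^ ((i : ℕ) * l)) • insComp φ ψ i f := by
  simp [gComp]

def baseTuple (i : Fin (k + 1)) (f : Fin (k + l + 1) → A) : Fin (k + 1) → A := fun j =>
  if (j : ℕ) < (i : ℕ) then f ⟨(j : ℕ), by have := j.isLt; omega⟩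
  else f ⟨(j : ℕ) + l, by have := j.isLt; omega⟩

def innerTuple (i : Fin (k + 1)) (f : Fin (k + l + 1) → A) : Fin (l + 1) → A := fun t =>
  f ⟨(i : ℕ) + (t : ℕ), by have := i.isLt; have := t.isLt; omega⟩

lemma insTuple_eq_update (ψ : Cochain A l) (i : Fin (k+1)) (f : Fin (k + l + 1) → A) :
    insTuple ψ i f = Function.update (baseTuple i f) i (ψ (innerTuple (l := l) i f)) := by
  funext j
  by_cases hj : j = i
  · subst hj
    simp only [insTuple, Function.update_self, lt_irrefl, if_false, if_pos rfl]
    rfl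
  · have hj' : (j : ℕ) ≠ (i : ℕ) := fun h => hj (Fin.ext h)
    rw [Function.update_of_ne hj]
    simp [insTuple, baseTuple, hj']
end Aux

section Comb
variable {A : Type*} [AddCommGroup A] {k l m : ℕ}

lemma fcongr {n : ℕ} (f : Fin n → A) {x y : Fin n} (h : (x : ℕ) = (y : ℕ)) :
    f x = f y := congrArg f (Fin.ext h)

lemma inside (φ : Cochain A k) (ψ : Cochain A l) (χ : Cochain A m)
    {i b : ℕ} (hi : i ≤ k) (hb : b ≤ l) (f : Fin (k + l + m + 1) → A) :
    insComp φ (insComp ψ χ ⟨b, by omega⟩) ⟨i, by omega⟩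
        (fun j => f (Fin.cast (by omega) j)) =
      insComp (insComp φ ψ ⟨i, by omega⟩) χ ⟨i + b, by omega⟩ f := by
  rw [insComp_apply, insComp_apply, insComp_apply]
  congr 1
  funext j
  simp only [insTuple, insComp_apply, Fin.val_mk]
  split_ifs <;>
    first
      | omega
      | (apply fcongr; (first | (simp only [Fin.coe_cast, Fin.val_mk] <;> omega) | omega))
      | (apply congrArg; funext u; simp only [insTuple, Fin.val_mk]; split_ifs <;>
          first
            | omega
            | (apply fcongr; (first | (simp only [Fin.coe_cast, Fin.val_mk] <;> omega) | omega))
            | (apply congrArg; funext t; apply fcongr;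
                (first | (simp only [Fin.coe_cast, Fin.val_mk] <;> omega) | omega)))

lemma disjoint (φ : Cochain A k) (ψ : Cochain A l) (χ : Cochain A m)
    {p q : ℕ} (hpq : p < q) (hq : q ≤ k) (f : Fin (k + l + m + 1) → A) :
    insComp (insComp φ ψ ⟨p, by omega⟩) χ ⟨q + l, by omega⟩ f =
      insComp (insComp φ χ ⟨q, by omega⟩) ψ ⟨p, by omega⟩
        (fun j => f (Fin.cast (by omega) j)) := by
  rw [insComp_apply, insComp_apply, insComp_apply, insComp_apply]
  congr 1
  funext j
  simp only [insTuple, Fin.val_mk]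
  split_ifs <;>
    first
      | omega
      | (apply fcongr; (first | (simp only [Fin.coe_cast, Fin.val_mk] <;> omega) | omega))
      | (apply congrArg; funext u;
          first
            | (apply fcongr; (first | (simp only [Fin.coe_cast, Fin.val_mk] <;> omega) | omega))
            | ((try simp only [insTuple, Fin.val_mk, Fin.coe_cast]); split_ifs <;>
                first
                  | omega
                  | (apply fcongr; (first | (simp only [Fin.coe_cast, Fin.val_mk] <;> omega) | omega))
                  | (apply congrArg; funext t; apply fcongr;
                      (first | (simp only [Fin.coe_cast, Fin.val_mk] <;> omega) | omega))))
end Comb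

section Pull
variable {R : Type*} [CommRing R] {A : Type*} [AddCommGroup A] [Module R A] {k l m : ℕ}

/-- the map `x ↦ φ (update base p x)` as an additive hom. -/
def coordHom (φ : MultilinearMap R (fun _ : Fin (k + 1) => A) A)
    (base : Fin (k + 1) → A) (p : Fin (k + 1)) : A →+ A where
  toFun x := φ (Function.update base p x)
  map_zero' := by simp
  map_add' x y := by simp [MultilinearMap.map_update_add]

lemma insComp_ml_apply (φ : MultilinearMap R (fun _ : Fin (k + 1) => A) A)
    (δ : Cochain A l) (i : Fin (k + 1)) (g : Fin (k + l + 1) → A) :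
    insComp ⇑φ δ i g = coordHom φ (baseTuple i g) i (δ (innerTuple i g)) := by
  rw [insComp_apply, insTuple_eq_update]; rfl

lemma pull (φ : MultilinearMap R (fun _ : Fin (k + 1) => A) A)
    (β : Cochain A l) (γ : Cochain A m) (i : Fin (k + 1))
    (g : Fin (k + (l + m) + 1) → A) :
    insComp ⇑φ (gComp β γ) i g =
      ∑ b : Fin (l + 1), ((-1 : ℤ) ^ ((b : ℕ) * m)) • insComp ⇑φ (insComp β γ b) i g := by
  rw [insComp_ml_apply, gComp_apply, map_sum]
  refine Finset.sum_congr rfl fun b _ => ?_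
  rw [map_zsmul, insComp_ml_apply]
end Pull

section Terms
variable {A : Type*} [AddCommGroup A] {k l m : ℕ}

lemma fin_sum_to_range {A : Type*} [AddCommGroup A] {n : ℕ} (F : Fin n → A) (G : ℕ → A)
    (h : ∀ i : Fin n, F i = G i) : ∑ i : Fin n, F i = ∑ i ∈ Finset.range n, G i := by
  rw [show F = (fun i : Fin n => G i) from funext h, Fin.sum_univ_eq_sum_range]

def Pt (φ : Cochain A k) (ψ : Cochain A l) (χ : Cochain A m)
    (f : Fin (k + l + m + 1) → A) (i a : ℕ) : A :=
  if h : i ≤ k ∧ a ≤ k + l then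
    insComp (insComp φ ψ ⟨i, by omega⟩) χ ⟨a, by omega⟩ f else 0

def Qt (φ : Cochain A k) (ψ : Cochain A l) (χ : Cochain A m)
    (f : Fin (k + l + m + 1) → A) (i b : ℕ) : A :=
  if h : i ≤ k ∧ b ≤ l then
    insComp φ (insComp ψ χ ⟨b, by omega⟩) ⟨i, by omega⟩
      (fun j => f (Fin.cast (by omega) j)) else 0

lemma term1 (φ : Cochain A k) (ψ : Cochain A l) (χ : Cochain A m)
    (f : Fin (k + l + m + 1) → A) :
    gComp (gComp φ ψ) χ f =
      ∑ a ∈ Finset.range (k + l + 1), ∑ i ∈ Finset.range (k + 1),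
        ((-1 : ℤ) ^ (a * m + i * l)) • Pt φ ψ χ f i a := by
  rw [gComp_apply]
  have h2 : ∀ a : Fin (k + l + 1), insComp (gComp φ ψ) χ a f =
      ∑ i : Fin (k + 1), ((-1 : ℤ) ^ ((i : ℕ) * l)) • insComp (insComp φ ψ i) χ a f := by
    intro a
    rw [insComp_apply, gComp_apply]
    rfl
  simp_rw [h2, Finset.smul_sum, smul_smul, ← pow_add]
  refine fin_sum_to_range _ _ fun a => fin_sum_to_range _ _ fun i => ?_
  rw [Pt, dif_pos ⟨by omega, by omega⟩]

lemma term2 {R : Type*} [CommRing R] [Module R A]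
    (φ : MultilinearMap R (fun _ : Fin (k + 1) => A) A) (ψ : Cochain A l) (χ : Cochain A m)
    (h₀ : k + (l + m) = k + l + m) (f : Fin (k + l + m + 1) → A) :
    castC h₀ (gComp ⇑φ (gComp ψ χ)) f =
      ∑ i ∈ Finset.range (k + 1), ∑ b ∈ Finset.range (l + 1),
        ((-1 : ℤ) ^ (i * (l + m) + b * m)) • Qt ⇑φ ψ χ f i b := by
  rw [show castC h₀ (gComp ⇑φ (gComp ψ χ)) f
      = gComp ⇑φ (gComp ψ χ) (fun j => f (Fin.cast (by omega) j)) from rfl, gComp_apply]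
  simp_rw [pull, Finset.smul_sum, smul_smul, ← pow_add]
  refine fin_sum_to_range _ _ fun i => fin_sum_to_range _ _ fun b => ?_
  rw [Qt, dif_pos ⟨by omega, by omega⟩]
end Terms

section Key
variable {A : Type*} [AddCommGroup A]
open Finset

lemma tri (n : ℕ) (F : ℕ → ℕ → A) :
    ∑ p ∈ range n, ∑ q ∈ Ico (p + 1) n, F p q
      = ∑ q ∈ range n, ∑ p ∈ range q, F p q := by
  rw [sum_sigma' (range n) (fun p => Ico (p+1) n) (fun p q => F p q),
      sum_sigma' (range n) (fun q => range q) (fun q p => F p q)]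
  refine sum_nbij' (fun x => ⟨x.2, x.1⟩) (fun x => ⟨x.2, x.1⟩) ?_ ?_
    (fun x _ => rfl) (fun x _ => rfl) (fun x _ => rfl) <;>
    (intro x hx; simp only [mem_sigma, mem_range, mem_Ico] at *; omega)

lemma splitSum (k l : ℕ) (g : ℕ → ℕ → A) :
    ∑ a ∈ range (k + l + 1), ∑ i ∈ range (k + 1), g i a
      = (∑ i ∈ range (k + 1), ∑ p ∈ range i, g i p)
        + (∑ i ∈ range (k + 1), ∑ b ∈ range (l + 1), g i (i + b))
        + ∑ i ∈ range (k + 1), ∑ q ∈ Ico (i + 1) (k + 1), g i (q + l) := by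
  rw [Finset.sum_comm, ← Finset.sum_add_distrib, ← Finset.sum_add_distrib]
  refine Finset.sum_congr rfl fun i hi => ?_
  have hik : i ≤ k := by have := Finset.mem_range.mp hi; omega
  rw [Finset.range_eq_Ico,
      ← Finset.sum_Ico_consecutive (fun a => g i a) (by omega : (0:ℕ) ≤ i)
        (by omega : i ≤ k + l + 1),
      ← Finset.sum_Ico_consecutive (fun a => g i a) (by omega : i ≤ i + l + 1)
        (by omega : i + l + 1 ≤ k + l + 1), ← add_assoc]
  congr 1
  · congr 1
    all_goals try rw [← Finset.range_eq_Ico]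
    all_goals rw [Finset.sum_Ico_eq_sum_range, show i + l + 1 - i = l + 1 by omega]
  · rw [Finset.sum_Ico_eq_sum_range, Finset.sum_Ico_eq_sum_range,
      show k + l + 1 - (i + l + 1) = k - i by omega, show k + 1 - (i + 1) = k - i by omega]
    exact Finset.sum_congr rfl fun t _ => congrArg (g i) (by omega)

lemma key {k l m : ℕ} (P P' Q Q' : ℕ → ℕ → A)
    (hA : ∀ i b, i ≤ k → b ≤ l → Q i b = P i (i + b))
    (hA' : ∀ i b, i ≤ k → b ≤ m → Q' i b = P' i (i + b))
    (hB : ∀ p q, p < q → q ≤ k → P p (q + l) = P' q p)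
    (hB' : ∀ p q, p < q → q ≤ k → P' p (q + m) = P q p) :
    (∑ a ∈ range (k + l + 1), ∑ i ∈ range (k + 1), ((-1 : ℤ) ^ (a * m + i * l)) • P i a)
      - ∑ i ∈ range (k + 1), ∑ b ∈ range (l + 1), ((-1 : ℤ) ^ (i * (l + m) + b * m)) • Q i b
    = ((-1 : ℤ) ^ (l * m)) •
        ((∑ a ∈ range (k + m + 1), ∑ i ∈ range (k + 1), ((-1 : ℤ) ^ (a * l + i * m)) • P' i a)
          - ∑ i ∈ range (k + 1), ∑ b ∈ range (m + 1), ((-1 : ℤ) ^ (i * (m + l) + b * l)) • Q' i b) := by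
  have hsign : ∀ x y : ℕ, ((-1 : ℤ)) ^ (x + 2 * y) = (-1) ^ x := fun x y => by
    rw [pow_add, pow_mul]; norm_num
  rw [splitSum k l (fun i a => ((-1 : ℤ) ^ (a * m + i * l)) • P i a),
      splitSum k m (fun i a => ((-1 : ℤ) ^ (a * l + i * m)) • P' i a)]
  have hM : (∑ i ∈ range (k + 1), ∑ b ∈ range (l + 1), ((-1 : ℤ) ^ (i * (l + m) + b * m)) • Q i b)
      = ∑ i ∈ range (k + 1), ∑ b ∈ range (l + 1), ((-1 : ℤ) ^ ((i + b) * m + i * l)) • P i (i + b) := by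
    refine Finset.sum_congr rfl fun i hi => Finset.sum_congr rfl fun b hb => ?_
    rw [hA i b (by have := Finset.mem_range.mp hi; omega) (by have := Finset.mem_range.mp hb; omega),
      show i * (l + m) + b * m = (i + b) * m + i * l by ring]
  have hM' : (∑ i ∈ range (k + 1), ∑ b ∈ range (m + 1), ((-1 : ℤ) ^ (i * (m + l) + b * l)) • Q' i b)
      = ∑ i ∈ range (k + 1), ∑ b ∈ range (m + 1), ((-1 : ℤ) ^ ((i + b) * l + i * m)) • P' i (i + b) := by
    refine Finset.sum_congr rfl fun i hi => Finset.sum_congr rfl fun b hb => ?_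
    rw [hA' i b (by have := Finset.mem_range.mp hi; omega) (by have := Finset.mem_range.mp hb; omega),
      show i * (m + l) + b * l = (i + b) * l + i * m by ring]
  rw [hM, hM']
  have hcan : ∀ x y z : A, x + y + z - y = x + z := fun x y z => by abel
  rw [hcan, hcan, smul_add]
  have h1 : (∑ i ∈ range (k + 1), ∑ q ∈ Ico (i + 1) (k + 1),
        ((-1 : ℤ) ^ ((q + l) * m + i * l)) • P i (q + l))
      = ((-1 : ℤ) ^ (l * m)) •
          ∑ i ∈ range (k + 1), ∑ p ∈ range i, ((-1 : ℤ) ^ (p * l + i * m)) • P' i p := by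
    rw [tri (k + 1) (fun p q => ((-1 : ℤ) ^ ((q + l) * m + p * l)) • P p (q + l)),
        Finset.smul_sum]
    refine Finset.sum_congr rfl fun q hq => ?_
    rw [Finset.smul_sum]
    refine Finset.sum_congr rfl fun p hp => ?_
    rw [hB p q (Finset.mem_range.mp hp) (by have := Finset.mem_range.mp hq; omega),
        smul_smul, ← pow_add, show l * m + (p * l + q * m) = (q + l) * m + p * l by ring]
  have h2 : (∑ i ∈ range (k + 1), ∑ p ∈ range i, ((-1 : ℤ) ^ (p * m + i * l)) • P i p)
      = ((-1 : ℤ) ^ (l * m)) •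
          ∑ i ∈ range (k + 1), ∑ q ∈ Ico (i + 1) (k + 1),
            ((-1 : ℤ) ^ ((q + m) * l + i * m)) • P' i (q + m) := by
    rw [tri (k + 1) (fun p q => ((-1 : ℤ) ^ ((q + m) * l + p * m)) • P' p (q + m)),
        Finset.smul_sum]
    refine Finset.sum_congr rfl fun q hq => ?_
    rw [Finset.smul_sum]
    refine Finset.sum_congr rfl fun p hp => ?_
    rw [← hB' p q (Finset.mem_range.mp hp) (by have := Finset.mem_range.mp hq; omega),
        smul_smul, ← pow_add,
        show l * m + ((q + m) * l + p * m) = (p * m + q * l) + 2 * (l * m) by ring, hsign]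
  rw [h1, h2]
  abel
end Key

/-- the Gerstenhaber composition is graded right-symmetric
(a graded pre-Lie product): for multilinear `φ ∈ C^k(A)`, `ψ ∈ C^l(A)`,
`χ ∈ C^m(A)`,
`(φ∘ψ)∘χ − φ∘(ψ∘χ) = (−1)^{lm} ((φ∘χ)∘ψ − φ∘(χ∘ψ))`. -/
theorem gerstenhaber_comp_right_symmetric
    {R : Type*} [CommRing R] {A : Type*} [AddCommGroup A] [Module R A]
    {k l m : ℕ}
    (φ : MultilinearMap R (fun _ : Fin (k + 1) => A) A)
    (ψ : MultilinearMap R (fun _ : Fin (l + 1) => A) A)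
    (χ : MultilinearMap R (fun _ : Fin (m + 1) => A) A) :
    gComp (gComp ⇑φ ⇑ψ) ⇑χ - castC (by omega) (gComp ⇑φ (gComp ⇑ψ ⇑χ)) =
      ((-1 : ℤ) ^ (l * m)) •
        (castC (by omega) (gComp (gComp ⇑φ ⇑χ) ⇑ψ) -
          castC (by omega) (gComp ⇑φ (gComp ⇑χ ⇑ψ))) := by
  funext f
  simp only [Pi.sub_apply, Pi.smul_apply]
  have hmk : k + (m + l) = k + m + l := by omega
  set f₃ : Fin (k + m + l + 1) → A := fun j => f (Fin.cast (by omega) j) with hf₃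
  calc gComp (gComp ⇑φ ⇑ψ) ⇑χ f
        - castC (by omega) (gComp ⇑φ (gComp ⇑ψ ⇑χ)) f
      = (∑ a ∈ Finset.range (k + l + 1), ∑ i ∈ Finset.range (k + 1),
            ((-1 : ℤ) ^ (a * m + i * l)) • Pt ⇑φ ⇑ψ ⇑χ f i a)
        - ∑ i ∈ Finset.range (k + 1), ∑ b ∈ Finset.range (l + 1),
            ((-1 : ℤ) ^ (i * (l + m) + b * m)) • Qt ⇑φ ⇑ψ ⇑χ f i b := by
        rw [term1 ⇑φ ⇑ψ ⇑χ f, term2 φ ⇑ψ ⇑χ (by omega) f]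
    _ = ((-1 : ℤ) ^ (l * m)) •
          ((∑ a ∈ Finset.range (k + m + 1), ∑ i ∈ Finset.range (k + 1),
              ((-1 : ℤ) ^ (a * l + i * m)) • Pt ⇑φ ⇑χ ⇑ψ f₃ i a)
            - ∑ i ∈ Finset.range (k + 1), ∑ b ∈ Finset.range (m + 1),
              ((-1 : ℤ) ^ (i * (m + l) + b * l)) • Qt ⇑φ ⇑χ ⇑ψ f₃ i b) := by
        refine key _ _ _ _ ?_ ?_ ?_ ?_
        · intro i b hi hb
          rw [Qt, Pt, dif_pos ⟨hi, hb⟩, dif_pos ⟨hi, by omega⟩]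
          exact inside ⇑φ ⇑ψ ⇑χ hi hb f
        · intro i b hi hb
          rw [Qt, Pt, dif_pos ⟨hi, hb⟩, dif_pos ⟨hi, by omega⟩]
          exact inside ⇑φ ⇑χ ⇑ψ hi hb f₃
        · intro p q hpq hq
          rw [Pt, Pt, dif_pos ⟨by omega, by omega⟩, dif_pos ⟨by omega, by omega⟩]
          exact disjoint ⇑φ ⇑ψ ⇑χ hpq hq f
        · intro p q hpq hq
          rw [Pt, Pt, dif_pos ⟨by omega, by omega⟩, dif_pos ⟨by omega, by omega⟩]
          exact disjoint ⇑φ ⇑χ ⇑ψ hpq hq f₃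
    _ = ((-1 : ℤ) ^ (l * m)) •
          (gComp (gComp ⇑φ ⇑χ) ⇑ψ f₃ - castC hmk (gComp ⇑φ (gComp ⇑χ ⇑ψ)) f₃) := by
        rw [term1 ⇑φ ⇑χ ⇑ψ f₃, term2 φ ⇑χ ⇑ψ hmk f₃]
    _ = ((-1 : ℤ) ^ (l * m)) •
          (castC (by omega) (gComp (gComp ⇑φ ⇑χ) ⇑ψ) f -
            castC (by omega) (gComp ⇑φ (gComp ⇑χ ⇑ψ)) f) := rfl
end

section
/- The Gerstenhaber bracket makes the Hochschild cochains of A into a graded Lie algebra: for all φ ∈ C^{k}(A), ψ ∈ C^{l}(A), χ ∈ C^{m}(A) one has the graded antisymmetry [ψ,φ]_G = −(−1)^{kl} [φ,ψ]_G and the graded Jacobi identity (−1)^{km} [[φ,ψ]_G, χ]_G + (−1)^{lk} [[ψ,χ]_G, φ]_G + (−1)^{ml} [[χ,φ]_G, ψ]_G = 0. -/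
/-- The Gerstenhaber bracket `[φ,ψ]_G = φ∘ψ − (−1)^{kl} ψ∘φ`. -/
def gBracket {A : Type*} [AddCommGroup A] {k l : ℕ} (φ : Cochain A k) (ψ : Cochain A l) :
    Cochain A (k + l) :=
  gComp φ ψ - ((-1 : ℤ) ^ (k * l)) • castC (Nat.add_comm l k) (gComp ψ φ)

open Finset

set_option linter.unusedSectionVars false

namespace GerstAux

variable {A : Type*} [AddCommGroup A]

/-- Unbounded cochains. -/
abbrev E (A : Type*) := (ℕ → A) → A

/-- insertion composition on unbounded cochains -/
def ic (F G : E A) (i l : ℕ) : E A := fun g =>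
  F fun j => if j < i then g j else if j = i then G (fun t => g (i + t)) else g (j + l)

def GC (F G : E A) (k l : ℕ) : E A :=
  ∑ i ∈ Finset.range (k + 1), ((-1 : ℤ) ^ (i * l)) • ic F G i l

/-- embed a cochain as an unbounded cochain -/
def eC {k : ℕ} (φ : Cochain A k) : E A := fun g => φ fun j => g j

lemma eC_inj {k : ℕ} {φ ψ : Cochain A k} (h : eC φ = eC ψ) : φ = ψ := by
  funext f
  have h2 := congrFun h (fun j => if hj : j < k + 1 then f ⟨j, hj⟩ else 0)
  simpa [eC, fun (j : Fin (k+1)) => j.isLt] using h2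

lemma eC_add {k : ℕ} (φ ψ : Cochain A k) : eC (φ + ψ) = eC φ + eC ψ := rfl

lemma eC_sub {k : ℕ} (φ ψ : Cochain A k) : eC (φ - ψ) = eC φ - eC ψ := rfl

lemma eC_neg {k : ℕ} (φ : Cochain A k) : eC (-φ) = -eC φ := rfl

lemma eC_smul {k : ℕ} (z : ℤ) (φ : Cochain A k) : eC (z • φ) = z • eC φ := rfl

lemma eC_zero {k : ℕ} : eC (0 : Cochain A k) = 0 := rfl

lemma eC_sum {k : ℕ} {ι : Type*} (s : Finset ι) (f : ι → Cochain A k) :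
    eC (∑ i ∈ s, f i) = ∑ i ∈ s, eC (f i) := by
  funext g
  simp [eC, Finset.sum_apply]

lemma eC_castC {m n : ℕ} (h : m = n) (φ : Cochain A m) : eC (castC h φ) = eC φ := by
  subst h
  funext g
  simp [eC, castC]

lemma eC_insComp {k l : ℕ} (φ : Cochain A k) (ψ : Cochain A l) (i : Fin (k + 1)) :
    eC (insComp φ ψ i) = ic (eC φ) (eC ψ) (i : ℕ) l := by
  funext g
  simp only [eC, insComp, ic]

lemma eC_gComp {k l : ℕ} (φ : Cochain A k) (ψ : Cochain A l) :
    eC (gComp φ ψ) = GC (eC φ) (eC ψ) k l := by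
  rw [gComp, GC, eC_sum]
  rw [← Fin.sum_univ_eq_sum_range (fun i => ((-1 : ℤ) ^ (i * l)) • ic (eC φ) (eC ψ) i l)]
  exact Finset.sum_congr rfl fun i _ => by rw [eC_smul, eC_insComp]

lemma eC_gBracket {k l : ℕ} (φ : Cochain A k) (ψ : Cochain A l) :
    eC (gBracket φ ψ) = GC (eC φ) (eC ψ) k l - ((-1 : ℤ) ^ (k * l)) • GC (eC ψ) (eC φ) l k := by
  rw [gBracket, eC_sub, eC_smul, eC_castC, eC_gComp, eC_gComp]

end GerstAux
namespace GerstAux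

variable {A : Type*} [AddCommGroup A]

/-- `F` is additive in each slot `≤ a`. -/
def Lin (F : E A) (a : ℕ) : Prop :=
  ∀ i ≤ a, ∀ (g : ℕ → A) (x y : A),
    F (Function.update g i (x + y)) = F (Function.update g i x) + F (Function.update g i y)

/-- `F` only depends on the first `b+1` coordinates. -/
def Tr (F : E A) (b : ℕ) : Prop :=
  ∀ g g' : ℕ → A, (∀ j ≤ b, g j = g' j) → F g = F g'

/-- slot hom -/
def slotHom {F : E A} {a : ℕ} (hF : Lin F a) {i : ℕ} (hi : i ≤ a) (g : ℕ → A) : A →+ A :=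
  AddMonoidHom.mk' (fun x => F (Function.update g i x)) (fun x y => hF i hi g x y)

lemma ic_update (F G : E A) (i l : ℕ) (g : ℕ → A) :
    ic F G i l g =
      F (Function.update (fun j => if j < i then g j else g (j + l)) i
        (G fun t => g (i + t))) := by
  show F _ = F _
  congr 1
  funext j
  rcases eq_or_ne j i with rfl | hj
  · simp [ic]
  · simp only [Function.update_of_ne hj]
    rcases lt_or_gt_of_ne hj with h | h
    · simp [ic, h]
    · simp [ic, Nat.lt_asymm h, hj]

lemma linEC {R : Type*} [CommRing R] [Module R A] {a : ℕ}
    (φ : MultilinearMap R (fun _ : Fin (a + 1) => A) A) : Lin (eC ⇑φ) a := by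
  intro i hi g x y
  have key : ∀ v : A, (fun j : Fin (a+1) => Function.update g i v (j : ℕ)) =
      Function.update (fun j : Fin (a+1) => g (j : ℕ)) ⟨i, by omega⟩ v := by
    intro v
    funext j
    rcases eq_or_ne j ⟨i, by omega⟩ with rfl | hj
    · simp
    · have hj' : (j : ℕ) ≠ i := fun h => hj (Fin.ext h)
      rw [Function.update_of_ne hj, Function.update_of_ne hj']
  show φ _ = φ _ + φ _
  rw [show (fun j : Fin (a+1) => Function.update g i (x + y) (j:ℕ)) =
      Function.update (fun j : Fin (a+1) => g (j:ℕ)) ⟨i, by omega⟩ (x+y) from key _,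
    show (fun j : Fin (a+1) => Function.update g i x (j:ℕ)) =
      Function.update (fun j : Fin (a+1) => g (j:ℕ)) ⟨i, by omega⟩ x from key _,
    show (fun j : Fin (a+1) => Function.update g i y (j:ℕ)) =
      Function.update (fun j : Fin (a+1) => g (j:ℕ)) ⟨i, by omega⟩ y from key _]
  exact φ.map_update_add _ _ _ _

lemma trEC {k : ℕ} (φ : Cochain A k) : Tr (eC φ) k := by
  intro g g' h
  show φ _ = φ _
  congr 1
  funext j
  exact h j (by omega)

/-- Nested composition identity. -/
lemma ic_nest (F G H : E A) {i t b : ℕ} (c : ℕ) (ht : t ≤ b) :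
    ic (ic F G i b) H (i + t) c = ic F (ic G H t c) i (b + c) := by
  funext g
  show F _ = F _
  congr 1
  funext j
  simp only [ic]
  by_cases h1 : j < i
  · rw [if_pos h1, if_pos h1, if_pos (show j < i + t by omega)]
  · by_cases h2 : j = i
    · subst h2
      rw [if_neg h1, if_neg h1, if_pos rfl, if_pos rfl]
      congr 1
      funext s
      by_cases h3 : s < t
      · rw [if_pos (show j + s < j + t by omega), if_pos h3]
      · by_cases h4 : s = t
        · subst h4
          rw [if_neg (show ¬ j + s < j + s by omega), if_pos rfl, if_neg h3, if_pos rfl]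
          congr 1
          funext u
          congr 1
          omega
        · rw [if_neg (show ¬ j + s < j + t by omega),
            if_neg (show j + s ≠ j + t by omega), if_neg h3, if_neg h4]
          congr 1
          omega
    · rw [if_neg h1, if_neg h2, if_neg h1, if_neg h2,
        if_neg (show ¬ j + b < i + t by omega), if_neg (show j + b ≠ i + t by omega)]
      congr 1
      omega

/-- Disjoint composition commutation. -/
lemma ic_disj (F G H : E A) {i j b : ℕ} (c : ℕ) (hij : i < j) (hG : Tr G b) :
    ic (ic F G i b) H (j + b) c = ic (ic F H j c) G i b := by
  funext g
  show F _ = F _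
  congr 1
  funext j0
  simp only [ic]
  by_cases h1 : j0 < i
  · rw [if_pos h1, if_pos h1, if_pos (show j0 < j + b by omega), if_pos (show j0 < j by omega)]
  · by_cases h2 : j0 = i
    · subst h2
      rw [if_pos (show j0 < j from hij), if_neg h1, if_neg h1, if_pos rfl, if_pos rfl]
      apply hG
      intro s hs
      rw [if_pos (show j0 + s < j + b by omega)]
    · by_cases h3 : j0 < j
      · rw [if_neg h1, if_neg h2, if_neg h1, if_neg h2, if_pos h3,
          if_pos (show j0 + b < j + b by omega)]
      · by_cases h4 : j0 = j
        · subst h4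
          rw [if_neg h1, if_neg h2, if_neg h1, if_neg h2, if_neg h3,
            if_pos (show j0 = j0 from rfl), if_neg (show ¬ j0 + b < j0 + b by omega),
            if_pos (show j0 + b = j0 + b from rfl)]
          congr 1
          funext u
          rw [if_neg (show ¬ j0 + u < i by omega), if_neg (show j0 + u ≠ i by omega)]
          congr 1
          omega
        · rw [if_neg h1, if_neg h2, if_neg h1, if_neg h2, if_neg h3, if_neg h4,
            if_neg (show ¬ j0 + b < j + b by omega), if_neg (show j0 + b ≠ j + b by omega),
            if_neg (show ¬ j0 + c < i by omega), if_neg (show j0 + c ≠ i by omega)]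
          congr 1
          omega

end GerstAux
namespace GerstAux

open Finset

variable {A : Type*} [AddCommGroup A]

lemma ic_GC_left (F G H : E A) (a b j c : ℕ) :
    ic (GC F G a b) H j c =
      ∑ i ∈ Finset.range (a + 1), ((-1 : ℤ) ^ (i * b)) • ic (ic F G i b) H j c := by
  funext g
  simp [ic, GC, Finset.sum_apply, Pi.smul_apply]

lemma ic_sum_right {F : E A} {a : ℕ} (hF : Lin F a) {i : ℕ} (hi : i ≤ a)
    {ι : Type*} (s : Finset ι) (z : ι → ℤ) (Y : ι → E A) (q : ℕ) :
    ic F (∑ t ∈ s, z t • Y t) i q = ∑ t ∈ s, z t • ic F (Y t) i q := by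
  funext g
  rw [ic_update]
  have h1 : (∑ t ∈ s, z t • Y t) (fun u => g (i + u))
      = ∑ t ∈ s, z t • Y t (fun u => g (i + u)) := by
    simp [Finset.sum_apply]
  rw [h1]
  have h2 : F (Function.update (fun j => if j < i then g j else g (j + q)) i
        (∑ t ∈ s, z t • Y t (fun u => g (i + u))))
      = slotHom hF hi (fun j => if j < i then g j else g (j + q))
          (∑ t ∈ s, z t • Y t (fun u => g (i + u))) := rfl
  rw [h2, map_sum]
  have h3 : ∀ t, (slotHom hF hi (fun j => if j < i then g j else g (j + q)))
        (z t • Y t (fun u => g (i + u)))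
      = z t • (slotHom hF hi (fun j => if j < i then g j else g (j + q)))
          (Y t (fun u => g (i + u))) := fun t => map_zsmul _ _ _
  rw [Finset.sum_congr rfl fun t _ => h3 t]
  have h4 : (∑ t ∈ s, z t • ic F (Y t) i q) g = ∑ t ∈ s, z t • (ic F (Y t) i q) g := by
    simp [Finset.sum_apply]
  rw [h4]
  refine Finset.sum_congr rfl fun t _ => ?_
  rw [ic_update]
  rfl

lemma GC_left_expand (F G H : E A) (a b c : ℕ) :
    GC (GC F G a b) H (a + b) c =
      ∑ i ∈ Finset.range (a + 1), ∑ j ∈ Finset.range (a + b + 1),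
        ((-1 : ℤ) ^ (i * b + j * c)) • ic (ic F G i b) H j c := by
  calc GC (GC F G a b) H (a + b) c
      = ∑ j ∈ Finset.range (a + b + 1), ((-1 : ℤ) ^ (j * c)) •
          ∑ i ∈ Finset.range (a + 1), ((-1 : ℤ) ^ (i * b)) • ic (ic F G i b) H j c := by
        rw [GC]
        exact Finset.sum_congr rfl fun j _ => by rw [ic_GC_left]
    _ = ∑ j ∈ Finset.range (a + b + 1), ∑ i ∈ Finset.range (a + 1),
          ((-1 : ℤ) ^ (i * b + j * c)) • ic (ic F G i b) H j c := by
        refine Finset.sum_congr rfl fun j _ => ?_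
        rw [Finset.smul_sum]
        refine Finset.sum_congr rfl fun i _ => ?_
        rw [smul_smul, ← pow_add, Nat.add_comm (j * c) (i * b)]
    _ = _ := Finset.sum_comm

lemma GC_right_expand {F : E A} {a : ℕ} (hF : Lin F a) (G H : E A) (b c : ℕ) :
    GC F (GC G H b c) a (b + c) =
      ∑ i ∈ Finset.range (a + 1), ∑ t ∈ Finset.range (b + 1),
        ((-1 : ℤ) ^ (i * b + i * c + t * c)) • ic F (ic G H t c) i (b + c) := by
  rw [GC]
  refine Finset.sum_congr rfl fun i hi => ?_
  have hi' : i ≤ a := by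
    simp only [Finset.mem_range] at hi; omega
  rw [GC, ic_sum_right hF hi', Finset.smul_sum]
  refine Finset.sum_congr rfl fun t _ => ?_
  rw [smul_smul, ← pow_add]
  congr 2
  ring

lemma range_split {M : Type*} [AddCommMonoid M] (a b i : ℕ) (hi : i ≤ a) (f : ℕ → M) :
    ∑ j ∈ Finset.range (a + b + 1), f j =
      (∑ j ∈ Finset.range i, f j) + (∑ t ∈ Finset.range (b + 1), f (i + t)) +
        ∑ j ∈ Finset.Ico (i + 1) (a + 1), f (j + b) := by
  have h1 : (∑ j ∈ Finset.Ico 0 i, f j) + (∑ j ∈ Finset.Ico i (a + b + 1), f j)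
      = ∑ j ∈ Finset.Ico 0 (a + b + 1), f j :=
    Finset.sum_Ico_consecutive f (by omega) (by omega)
  have h2 : (∑ j ∈ Finset.Ico i (i + b + 1), f j) + (∑ j ∈ Finset.Ico (i + b + 1) (a + b + 1), f j)
      = ∑ j ∈ Finset.Ico i (a + b + 1), f j :=
    Finset.sum_Ico_consecutive f (by omega) (by omega)
  have h3 : ∑ j ∈ Finset.Ico i (i + b + 1), f j = ∑ t ∈ Finset.range (b + 1), f (i + t) := by
    have hb : i + b + 1 - i = b + 1 := by omega
    rw [Finset.sum_Ico_eq_sum_range, hb]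
  have h4 : ∑ j ∈ Finset.Ico (i + b + 1) (a + b + 1), f j
      = ∑ j ∈ Finset.Ico (i + 1) (a + 1), f (j + b) := by
    rw [Finset.sum_Ico_eq_sum_range, Finset.sum_Ico_eq_sum_range]
    have he : a + b + 1 - (i + b + 1) = a + 1 - (i + 1) := by omega
    rw [he]
    refine Finset.sum_congr rfl fun t _ => ?_
    congr 1
    omega
  have h0 : ∑ j ∈ Finset.Ico 0 i, f j = ∑ j ∈ Finset.range i, f j := by
    rw [Finset.range_eq_Ico]
  calc ∑ j ∈ Finset.range (a + b + 1), f j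
      = ∑ j ∈ Finset.Ico 0 (a + b + 1), f j := by rw [Finset.range_eq_Ico]
    _ = (∑ j ∈ Finset.Ico 0 i, f j) + ∑ j ∈ Finset.Ico i (a + b + 1), f j := h1.symm
    _ = (∑ j ∈ Finset.Ico 0 i, f j) + ((∑ j ∈ Finset.Ico i (i + b + 1), f j)
          + ∑ j ∈ Finset.Ico (i + b + 1) (a + b + 1), f j) := by rw [h2]
    _ = _ := by rw [h0, h3, h4, add_assoc]

/-- left-disjoint part of the double sum -/
def Lpart (F G H : E A) (a b c : ℕ) : E A :=
  ∑ i ∈ Finset.range (a + 1), ∑ j ∈ Finset.range i,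
    ((-1 : ℤ) ^ (i * b + j * c)) • ic (ic F G i b) H j c

lemma Dassoc_eq {F : E A} {a : ℕ} (hF : Lin F a) {G : E A} {b : ℕ} (hG : Tr G b)
    (H : E A) (c : ℕ) :
    GC (GC F G a b) H (a + b) c - GC F (GC G H b c) a (b + c) =
      Lpart F G H a b c + ((-1 : ℤ) ^ (b * c)) • Lpart F H G a c b := by
  rw [GC_left_expand, GC_right_expand hF]
  have split : ∀ i ∈ Finset.range (a + 1),
      (∑ j ∈ Finset.range (a + b + 1),
        ((-1 : ℤ) ^ (i * b + j * c)) • ic (ic F G i b) H j c)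
      = (∑ j ∈ Finset.range i, ((-1 : ℤ) ^ (i * b + j * c)) • ic (ic F G i b) H j c)
        + (∑ t ∈ Finset.range (b + 1),
            ((-1 : ℤ) ^ (i * b + (i + t) * c)) • ic (ic F G i b) H (i + t) c)
        + ∑ j ∈ Finset.Ico (i + 1) (a + 1),
            ((-1 : ℤ) ^ (i * b + (j + b) * c)) • ic (ic F G i b) H (j + b) c := by
    intro i hi
    exact range_split a b i (by simp only [Finset.mem_range] at hi; omega) _
  rw [Finset.sum_congr rfl split, Finset.sum_add_distrib, Finset.sum_add_distrib]
  have hM : ∑ i ∈ Finset.range (a + 1), ∑ t ∈ Finset.range (b + 1),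
        ((-1 : ℤ) ^ (i * b + (i + t) * c)) • ic (ic F G i b) H (i + t) c
      = ∑ i ∈ Finset.range (a + 1), ∑ t ∈ Finset.range (b + 1),
        ((-1 : ℤ) ^ (i * b + i * c + t * c)) • ic F (ic G H t c) i (b + c) := by
    refine Finset.sum_congr rfl fun i _ => Finset.sum_congr rfl fun t ht => ?_
    have ht' : t ≤ b := by simp only [Finset.mem_range] at ht; omega
    rw [ic_nest F G H c ht']
    congr 2
    ring
  have hR : ∑ i ∈ Finset.range (a + 1), ∑ j ∈ Finset.Ico (i + 1) (a + 1),
        ((-1 : ℤ) ^ (i * b + (j + b) * c)) • ic (ic F G i b) H (j + b) c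
      = ((-1 : ℤ) ^ (b * c)) • Lpart F H G a c b := by
    rw [Finset.sum_comm' (t' := Finset.range (a + 1)) (s' := fun j => Finset.range j)
      (by intro x y; simp only [Finset.mem_range, Finset.mem_Ico]; omega)]
    rw [Lpart, Finset.smul_sum]
    refine Finset.sum_congr rfl fun j _ => ?_
    rw [Finset.smul_sum]
    refine Finset.sum_congr rfl fun i hi => ?_
    have hij : i < j := by simp only [Finset.mem_range] at hi; omega
    rw [ic_disj F G H c hij hG, smul_smul, ← pow_add]
    congr 2
    ring
  rw [hM, hR, add_right_comm, add_sub_cancel_right]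
  rfl

/-- The graded pre-Lie (right-symmetry) identity. -/
lemma prelie {F : E A} {a : ℕ} (hF : Lin F a) {G : E A} {b : ℕ} (hG : Tr G b)
    {H : E A} {c : ℕ} (hH : Tr H c) :
    GC (GC F G a b) H (a + b) c - GC F (GC G H b c) a (b + c) =
      ((-1 : ℤ) ^ (b * c)) •
        (GC (GC F H a c) G (a + c) b - GC F (GC H G c b) a (c + b)) := by
  rw [Dassoc_eq hF hG H c, Dassoc_eq hF hH G b, smul_add, smul_smul, ← pow_add]
  have hε : ((-1 : ℤ) ^ (b * c + c * b)) = 1 := by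
    have h2 : b * c + c * b = 2 * (b * c) := by ring
    rw [h2, pow_mul]
    norm_num
  rw [hε, one_smul]
  exact add_comm _ _

end GerstAux
namespace GerstAux

variable {A : Type*} [AddCommGroup A]

lemma ic_sub_left (X Y Z : E A) (i q : ℕ) : ic (X - Y) Z i q = ic X Z i q - ic Y Z i q := rfl

lemma ic_smul_left (z : ℤ) (X Z : E A) (i q : ℕ) : ic (z • X) Z i q = z • ic X Z i q := rfl

lemma GC_sub_smul_left (X Y Z : E A) (z : ℤ) (p q : ℕ) :
    GC (X - z • Y) Z p q = GC X Z p q - z • GC Y Z p q := by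
  calc GC (X - z • Y) Z p q
      = ∑ i ∈ Finset.range (p + 1),
          (((-1 : ℤ) ^ (i * q)) • ic X Z i q - z • (((-1 : ℤ) ^ (i * q)) • ic Y Z i q)) := by
        rw [GC]
        refine Finset.sum_congr rfl fun i _ => ?_
        rw [ic_sub_left, ic_smul_left, smul_sub, smul_comm]
    _ = GC X Z p q - z • GC Y Z p q := by
        rw [Finset.sum_sub_distrib, ← Finset.smul_sum, GC, GC]

lemma ic_sub_smul_right {F : E A} {p : ℕ} (hF : Lin F p) {i : ℕ} (hi : i ≤ p)
    (X Y : E A) (z : ℤ) (q : ℕ) :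
    ic F (X - z • Y) i q = ic F X i q - z • ic F Y i q := by
  funext g
  have hv : (X - z • Y) (fun u => g (i + u)) =
      X (fun u => g (i + u)) - z • Y (fun u => g (i + u)) := rfl
  rw [ic_update, hv]
  have h1 : F (Function.update (fun j => if j < i then g j else g (j + q)) i
        (X (fun u => g (i + u)) - z • Y (fun u => g (i + u))))
      = slotHom hF hi (fun j => if j < i then g j else g (j + q))
          (X (fun u => g (i + u)) - z • Y (fun u => g (i + u))) := rfl
  rw [h1, map_sub, map_zsmul]
  have h2 : (ic F X i q - z • ic F Y i q) g = ic F X i q g - z • ic F Y i q g := rfl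
  rw [h2, ic_update F X, ic_update F Y]
  rfl

lemma GC_sub_smul_right {F : E A} {p : ℕ} (hF : Lin F p) (X Y : E A) (z : ℤ) (q : ℕ) :
    GC F (X - z • Y) p q = GC F X p q - z • GC F Y p q := by
  calc GC F (X - z • Y) p q
      = ∑ i ∈ Finset.range (p + 1),
          (((-1 : ℤ) ^ (i * q)) • ic F X i q - z • (((-1 : ℤ) ^ (i * q)) • ic F Y i q)) := by
        rw [GC]
        refine Finset.sum_congr rfl fun i hi => ?_
        have hi' : i ≤ p := by simp only [Finset.mem_range] at hi; omega
        rw [ic_sub_smul_right hF hi', smul_sub, smul_comm]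
    _ = GC F X p q - z • GC F Y p q := by
        rw [Finset.sum_sub_distrib, ← Finset.smul_sum, GC, GC]

lemma jacobi_abstract {M : Type*} [AddCommGroup M] (α β γ : ℤ)
    (hα : α = 1 ∨ α = -1) (hβ : β = 1 ∨ β = -1) (hγ : γ = 1 ∨ γ = -1)
    (a1 a2 a3 a4 b1 b2 b3 b4 c1 c2 c3 c4 : M)
    (P1 : a1 - b3 = β • (c2 - b4))
    (P2 : b1 - c3 = γ • (a2 - c4))
    (P3 : c1 - a3 = α • (b2 - a4)) :
    γ • ((a1 - α • a2) - (γ * β) • (a3 - α • a4))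
      + α • ((b1 - β • b2) - (α * γ) • (b3 - β • b4))
      + β • ((c1 - γ • c2) - (β * α) • (c3 - γ • c4)) = 0 := by
  rw [sub_eq_iff_eq_add] at P1 P2 P3
  rw [P1, P2, P3]
  rcases hα with rfl | rfl <;> rcases hβ with rfl | rfl <;> rcases hγ with rfl | rfl <;>
    norm_num <;> abel

lemma neg_one_pow_cases (n : ℕ) : ((-1 : ℤ) ^ n = 1) ∨ ((-1 : ℤ) ^ n = -1) := by
  rcases Nat.even_or_odd n with h | h
  · exact Or.inl h.neg_one_pow
  · exact Or.inr h.neg_one_pow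

lemma jacobiE (F G H : E A) (k l m : ℕ)
    (hF : Lin F k) (hG : Lin G l) (hH : Lin H m)
    (tF : Tr F k) (tG : Tr G l) (tH : Tr H m) :
    ((-1 : ℤ) ^ (k * m)) • (GC (GC F G k l - ((-1 : ℤ) ^ (k * l)) • GC G F l k) H (k + l) m
        - ((-1 : ℤ) ^ ((k + l) * m)) •
            GC H (GC F G k l - ((-1 : ℤ) ^ (k * l)) • GC G F l k) m (k + l))
      + ((-1 : ℤ) ^ (l * k)) • (GC (GC G H l m - ((-1 : ℤ) ^ (l * m)) • GC H G m l) F (l + m) k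
        - ((-1 : ℤ) ^ ((l + m) * k)) •
            GC F (GC G H l m - ((-1 : ℤ) ^ (l * m)) • GC H G m l) k (l + m))
      + ((-1 : ℤ) ^ (m * l)) • (GC (GC H F m k - ((-1 : ℤ) ^ (m * k)) • GC F H k m) G (m + k) l
        - ((-1 : ℤ) ^ ((m + k) * l)) •
            GC G (GC H F m k - ((-1 : ℤ) ^ (m * k)) • GC F H k m) l (m + k)) = 0 := by
  rw [GC_sub_smul_left, GC_sub_smul_left, GC_sub_smul_left,
    GC_sub_smul_right hH, GC_sub_smul_right hF, GC_sub_smul_right hG]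
  have s1 : ((-1 : ℤ) ^ (l * k)) = ((-1 : ℤ) ^ (k * l)) := by rw [Nat.mul_comm]
  have s2 : ((-1 : ℤ) ^ (m * k)) = ((-1 : ℤ) ^ (k * m)) := by rw [Nat.mul_comm]
  have s3 : ((-1 : ℤ) ^ (m * l)) = ((-1 : ℤ) ^ (l * m)) := by rw [Nat.mul_comm]
  have e1 : ((-1 : ℤ) ^ ((k + l) * m)) = ((-1 : ℤ) ^ (k * m)) * ((-1 : ℤ) ^ (l * m)) := by
    rw [add_mul, pow_add]
  have e2 : ((-1 : ℤ) ^ ((l + m) * k)) = ((-1 : ℤ) ^ (k * l)) * ((-1 : ℤ) ^ (k * m)) := by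
    rw [add_mul, pow_add, Nat.mul_comm l k, Nat.mul_comm m k]
  have e3 : ((-1 : ℤ) ^ ((m + k) * l)) = ((-1 : ℤ) ^ (l * m)) * ((-1 : ℤ) ^ (k * l)) := by
    rw [add_mul, pow_add, Nat.mul_comm m l, Nat.mul_comm k l]
  rw [s1, s2, s3, e1, e2, e3]
  have P1 : GC (GC F G k l) H (k + l) m - GC F (GC G H l m) k (l + m) =
      ((-1 : ℤ) ^ (l * m)) • (GC (GC F H k m) G (m + k) l - GC F (GC H G m l) k (l + m)) := by
    have h := prelie hF tG tH
    rw [Nat.add_comm k m, Nat.add_comm m l] at h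
    exact h
  have P2 : GC (GC G H l m) F (l + m) k - GC G (GC H F m k) l (m + k) =
      ((-1 : ℤ) ^ (k * m)) • (GC (GC G F l k) H (k + l) m - GC G (GC F H k m) l (m + k)) := by
    have h := prelie hG tH tF
    rw [Nat.mul_comm m k, Nat.add_comm l k, Nat.add_comm k m] at h
    exact h
  have P3 : GC (GC H F m k) G (m + k) l - GC H (GC F G k l) m (k + l) =
      ((-1 : ℤ) ^ (k * l)) • (GC (GC H G m l) F (l + m) k - GC H (GC G F l k) m (k + l)) := by
    have h := prelie hH tF tG
    rw [Nat.add_comm m l, Nat.add_comm l k] at h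
    exact h
  exact jacobi_abstract ((-1 : ℤ) ^ (k * l)) ((-1 : ℤ) ^ (l * m)) ((-1 : ℤ) ^ (k * m))
    (neg_one_pow_cases _) (neg_one_pow_cases _) (neg_one_pow_cases _)
    _ _ _ _ _ _ _ _ _ _ _ _ P1 P2 P3

end GerstAux
/-- the Gerstenhaber bracket makes Hochschild cochains into a graded
Lie algebra: graded antisymmetry `[ψ,φ]_G = −(−1)^{kl}[φ,ψ]_G` and the graded
Jacobi identity
`(−1)^{km}[[φ,ψ],χ] + (−1)^{lk}[[ψ,χ],φ] + (−1)^{ml}[[χ,φ],ψ] = 0`. -/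
theorem gerstenhaber_bracket_graded_lie
    {R : Type*} [CommRing R] {A : Type*} [AddCommGroup A] [Module R A]
    {k l m : ℕ}
    (φ : MultilinearMap R (fun _ : Fin (k + 1) => A) A)
    (ψ : MultilinearMap R (fun _ : Fin (l + 1) => A) A)
    (χ : MultilinearMap R (fun _ : Fin (m + 1) => A) A) :
    castC (Nat.add_comm l k) (gBracket ⇑ψ ⇑φ) =
        -(((-1 : ℤ) ^ (k * l)) • gBracket ⇑φ ⇑ψ) ∧
    ((-1 : ℤ) ^ (k * m)) • gBracket (gBracket ⇑φ ⇑ψ) ⇑χ +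
      ((-1 : ℤ) ^ (l * k)) • castC (by omega) (gBracket (gBracket ⇑ψ ⇑χ) ⇑φ) +
      ((-1 : ℤ) ^ (m * l)) • castC (by omega) (gBracket (gBracket ⇑χ ⇑φ) ⇑ψ) = 0 := by
  
  constructor
  · apply GerstAux.eC_inj
    rw [GerstAux.eC_castC, GerstAux.eC_gBracket, GerstAux.eC_neg, GerstAux.eC_smul,
      GerstAux.eC_gBracket]
    have s1 : ((-1 : ℤ) ^ (l * k)) = ((-1 : ℤ) ^ (k * l)) := by rw [Nat.mul_comm]
    have hsq : ((-1 : ℤ) ^ (k * l)) * ((-1 : ℤ) ^ (k * l)) = 1 := by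
      rw [← pow_add]
      have h2 : k * l + k * l = 2 * (k * l) := by ring
      rw [h2, pow_mul]
      norm_num
    rw [s1, smul_sub, smul_smul, hsq, one_smul, neg_sub]
  · apply GerstAux.eC_inj
    rw [GerstAux.eC_add, GerstAux.eC_add, GerstAux.eC_smul, GerstAux.eC_smul, GerstAux.eC_smul,
      GerstAux.eC_castC, GerstAux.eC_castC, GerstAux.eC_gBracket, GerstAux.eC_gBracket,
      GerstAux.eC_gBracket, GerstAux.eC_gBracket, GerstAux.eC_gBracket, GerstAux.eC_gBracket,
      GerstAux.eC_zero]
    exact GerstAux.jacobiE (GerstAux.eC ⇑φ) (GerstAux.eC ⇑ψ) (GerstAux.eC ⇑χ) k l m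
      (GerstAux.linEC φ) (GerstAux.linEC ψ) (GerstAux.linEC χ)
      (GerstAux.trEC ⇑φ) (GerstAux.trEC ⇑ψ) (GerstAux.trEC ⇑χ)
end
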